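/- If μ is a simple quasi-measure on a Hausdorff space X that is subadditive on open sets (μ(U ∪ V) ≤ μ(U) + μ(V)), then μ = δ_x for some point x ∈ X. In particular, every simple quasi-measure on ℝ is a Dirac measure. -/

import Mathlib

open Set MeasureTheory BoundedContinuousFunction Filter Topology

/-- An *image* is a set that is either open or closed. -/
def IsImage {X : Type*} [TopologicalSpace X] (A : Set X) : Prop := IsOpen A ∨ IsClosed A

/-- A (normalized, additive, compact-regular) quasi-measure on the images of `X`. -/
structure IsQuasiMeasure {X : Type*} [TopologicalSpace X] (μ : Set X → ℝ) : Prop where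
  nonneg : ∀ A : Set X, IsImage A → 0 ≤ μ A
  normalized : μ Set.univ = 1
  additive : ∀ A B : Set X, IsImage A → IsImage B → IsImage (A ∪ B) → Disjoint A B →
    μ (A ∪ B) = μ A + μ B
  regular : ∀ U : Set X, IsOpen U →
    IsLUB {r : ℝ | ∃ K : Set X, IsCompact K ∧ K ⊆ U ∧ μ K = r} (μ U)

/-- A quasi-measure is simple if it only takes the values 0 and 1. -/
def IsSimpleQM {X : Type*} [TopologicalSpace X] (μ : Set X → ℝ) : Prop :=
  ∀ A : Set X, IsImage A → μ A = 0 ∨ μ A = 1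

-- Membership in the singly generated algebra `A(c) = {φ ∘ c : φ ∈ C(ℝ,ℝ)}`.
-- def InAlg {X : Type*} [TopologicalSpace X] (c f : X →ᵇ ℝ) : Prop :=
-- ∃ φ : C(ℝ, ℝ), ∀ x, f x = φ (c x)
-- 
-- -- The quasi-integral of `a` with respect to `μ`: `∫ t dμ_a(t)` where `μ_a`
-- -- is the Borel probability measure extending `μ ∘ a⁻¹` (if it exists).
open Classical in
noncomputable def qint {X : Type*} [TopologicalSpace X] (μ : Set X → ℝ) (a : X →ᵇ ℝ) : ℝ :=
  if h : ∃ ν : MeasureTheory.Measure ℝ, MeasureTheory.IsProbabilityMeasure ν ∧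
      ∀ A : Set ℝ, IsImage A → ν A = ENNReal.ofReal (μ (a ⁻¹' A))
  then ∫ t, t ∂ h.choose else 0

/-- An image-transformation from `X` to `Y`. -/
structure IsImageTransformation {X Y : Type*} [TopologicalSpace X] [TopologicalSpace Y]
    (q : Set X → Set Y) : Prop where
  image : ∀ A : Set X, IsImage A → IsImage (q A)
  top : q Set.univ = Set.univ
  openMap : ∀ U : Set X, IsOpen U → IsOpen (q U)
  additive : ∀ A B : Set X, IsImage A → IsImage B → IsImage (A ∪ B) → Disjoint A B →
    q (A ∪ B) = q A ∪ q B ∧ Disjoint (q A) (q B)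
  regular : ∀ U : Set X, IsOpen U → ∀ K : Set Y, IsCompact K → K ⊆ q U →
    ∃ L : Set X, IsCompact L ∧ L ⊆ U ∧ K ⊆ q L

/-!
When the compact sets of measure one are closed under pairwise intersection, they have a common
point `x` (they are nonempty, compact and closed); every open neighbourhood of `x` then has
measure one, and inner regularity forces `μ = δ_x`. Subadditivity on open sets gives closure
under intersection, since `(K ∩ L)ᶜ = Kᶜ ∪ Lᶜ`. On `ℝ` the point is instead the threshold `t₀`
of the distribution function `t ↦ ν (Iic t)`: the complement of `Icc (t₀ - ε) (t₀ + ε)` is the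
disjoint union of two open rays of measure zero.
-/

open Classical in
def IsDiracAt {X : Type*} [TopologicalSpace X] (μ : Set X → ℝ) (x : X) : Prop :=
  ∀ A : Set X, IsImage A → μ A = if x ∈ A then 1 else 0

theorem IsImage.compl {X : Type*} [TopologicalSpace X] {A : Set X} (hA : IsImage A) :
    IsImage Aᶜ :=
  hA.symm.imp (fun h => h.isOpen_compl) fun h => h.isClosed_compl

namespace IsQuasiMeasure

variable {X : Type*} [TopologicalSpace X] {μ : Set X → ℝ}

theorem measure_empty (hμ : IsQuasiMeasure μ) : μ ∅ = 0 := by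
  have h := hμ.additive ∅ ∅ (Or.inl isOpen_empty) (Or.inl isOpen_empty)
    (by rw [union_empty]; exact Or.inl isOpen_empty) disjoint_bot_left
  rw [union_empty] at h
  linarith

theorem add_compl (hμ : IsQuasiMeasure μ) {A : Set X} (hA : IsImage A) : μ A + μ Aᶜ = 1 := by
  have h := hμ.additive A Aᶜ hA hA.compl (by rw [union_compl_self]; exact Or.inl isOpen_univ)
    disjoint_compl_right
  rwa [union_compl_self, hμ.normalized, eq_comm] at h

theorem le_one (hμ : IsQuasiMeasure μ) {A : Set X} (hA : IsImage A) : μ A ≤ 1 := by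
  linarith [hμ.add_compl hA, hμ.nonneg Aᶜ hA.compl]

theorem mono_of_isOpen (hμ : IsQuasiMeasure μ) {U V : Set X} (hU : IsOpen U) (hV : IsOpen V)
    (hUV : U ⊆ V) : μ U ≤ μ V := by
  refine (hμ.regular U hU).2 ?_
  rintro _ ⟨K, hK, hKU, rfl⟩
  exact (hμ.regular V hV).1 ⟨K, hK, hKU.trans hUV, rfl⟩

theorem mono_of_isClosed (hμ : IsQuasiMeasure μ) {C D : Set X} (hC : IsClosed C)
    (hD : IsClosed D) (hCD : C ⊆ D) : μ C ≤ μ D := by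
  have h := hμ.mono_of_isOpen hD.isOpen_compl hC.isOpen_compl (compl_subset_compl.2 hCD)
  linarith [hμ.add_compl (Or.inr hC), hμ.add_compl (Or.inr hD)]

theorem mono [T2Space X] (hμ : IsQuasiMeasure μ) {A B : Set X} (hA : IsImage A)
    (hB : IsImage B) (hAB : A ⊆ B) : μ A ≤ μ B := by
  rcases hA with hA | hA <;> rcases hB with hB | hB
  · exact hμ.mono_of_isOpen hA hB hAB
  · refine (hμ.regular A hA).2 ?_
    rintro _ ⟨K, hK, hKA, rfl⟩
    exact hμ.mono_of_isClosed hK.isClosed hB (hKA.trans hAB)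
  · have h := hμ.additive A (B \ A) (Or.inr hA) (Or.inl (hB.sdiff hA))
      (by rw [union_sdiff_cancel hAB]; exact Or.inl hB) disjoint_sdiff_right
    rw [union_sdiff_cancel hAB] at h
    linarith [hμ.nonneg (B \ A) (Or.inl (hB.sdiff hA))]
  · exact hμ.mono_of_isClosed hA hB hAB

/-- A compact set of measure one missing `x` would have a complement of measure one
around `x`, so every compact subset of an open set avoiding `x` is null. -/
theorem isDiracAt_of_forall_isOpen [T2Space X] (hμ : IsQuasiMeasure μ) {x : X}
    (h : ∀ U : Set X, IsOpen U → x ∈ U → μ U = 1) : IsDiracAt μ x := by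
  classical
  have hopen : ∀ U : Set X, IsOpen U → μ U = if x ∈ U then 1 else 0 := by
    intro U hU
    split_ifs with hxU
    · exact h U hU hxU
    refine le_antisymm ((hμ.regular U hU).2 ?_) (hμ.nonneg U (Or.inl hU))
    rintro _ ⟨K, hK, hKU, rfl⟩
    have hKc : μ Kᶜ = 1 := h Kᶜ hK.isClosed.isOpen_compl fun hxK => hxU (hKU hxK)
    linarith [hμ.add_compl (Or.inr hK.isClosed)]
  rintro A (hA | hA)
  · exact hopen A hA
  · have hc := hμ.add_compl (Or.inr hA)
    rw [hopen Aᶜ hA.isOpen_compl, mem_compl_iff] at hc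
    split_ifs at hc ⊢ <;> linarith

theorem inter_eq_one_of_subadditive (hμ : IsQuasiMeasure μ)
    (hsub : ∀ U V : Set X, IsOpen U → IsOpen V → μ (U ∪ V) ≤ μ U + μ V) {K L : Set X}
    (hK : IsClosed K) (hL : IsClosed L) (hK1 : μ K = 1) (hL1 : μ L = 1) : μ (K ∩ L) = 1 := by
  have hcompl := hμ.add_compl (Or.inr (hK.inter hL))
  rw [compl_inter] at hcompl
  have := hsub Kᶜ Lᶜ hK.isOpen_compl hL.isOpen_compl
  have := hμ.nonneg _ (Or.inl (hK.isOpen_compl.union hL.isOpen_compl))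
  linarith [hμ.add_compl (Or.inr hK), hμ.add_compl (Or.inr hL)]

end IsQuasiMeasure

namespace IsSimpleQM

variable {X : Type*} [TopologicalSpace X] [T2Space X] {μ : Set X → ℝ}

theorem exists_isCompact_subset_eq_one (hsimple : IsSimpleQM μ) (hμ : IsQuasiMeasure μ)
    {U : Set X} (hU : IsOpen U) (hU1 : μ U = 1) : ∃ K, IsCompact K ∧ K ⊆ U ∧ μ K = 1 := by
  by_contra! h
  have hbound : (0 : ℝ) ∈ upperBounds {r | ∃ K, IsCompact K ∧ K ⊆ U ∧ μ K = r} := by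
    rintro _ ⟨K, hK, hKU, rfl⟩
    exact ((hsimple K (Or.inr hK.isClosed)).resolve_right (h K hK hKU)).le
  linarith [(hμ.regular U hU).2 hbound]

theorem exists_forall_mem_of_inter (hsimple : IsSimpleQM μ) (hμ : IsQuasiMeasure μ)
    (hinter : ∀ K L : Set X, IsCompact K → IsCompact L → μ K = 1 → μ L = 1 → μ (K ∩ L) = 1) :
    ∃ x, ∀ K : Set X, IsCompact K → μ K = 1 → x ∈ K := by
  let 𝒦 := {K : Set X | IsCompact K ∧ μ K = 1}
  obtain ⟨K₀, hK₀, -, hK₀1⟩ :=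
    hsimple.exists_isCompact_subset_eq_one hμ isOpen_univ hμ.normalized
  have : Nonempty 𝒦 := ⟨⟨K₀, hK₀, hK₀1⟩⟩
  have hne (K : 𝒦) : (K : Set X).Nonempty := by
    refine nonempty_iff_ne_empty.2 fun hK => ?_
    have := K.2.2
    rw [hK, hμ.measure_empty] at this
    exact zero_ne_one this
  obtain ⟨x, hx⟩ := IsCompact.nonempty_iInter_of_directed_nonempty_isCompact_isClosed
    (fun K : 𝒦 => (K : Set X))
    (fun K L => ⟨⟨K ∩ L, K.2.1.inter_right L.2.1.isClosed, hinter K L K.2.1 L.2.1 K.2.2 L.2.2⟩,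
      inter_subset_left, inter_subset_right⟩)
    hne (fun K => K.2.1) fun K => K.2.1.isClosed
  exact ⟨x, fun K hK hK1 => mem_iInter.1 hx ⟨K, hK, hK1⟩⟩

/-- If `U ∋ x` is open, the compact set `K₀ \ U` misses `x`, hence is null; a compact set of
measure one inside its complement, cut down to `K₀`, lies in `U`. -/
theorem isDiracAt_of_forall_mem (hsimple : IsSimpleQM μ) (hμ : IsQuasiMeasure μ)
    (hinter : ∀ K L : Set X, IsCompact K → IsCompact L → μ K = 1 → μ L = 1 → μ (K ∩ L) = 1)
    {x : X} (hx : ∀ K : Set X, IsCompact K → μ K = 1 → x ∈ K) : IsDiracAt μ x := by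
  refine hμ.isDiracAt_of_forall_isOpen fun U hU hxU => ?_
  obtain ⟨K₀, hK₀, -, hK₀1⟩ :=
    hsimple.exists_isCompact_subset_eq_one hμ isOpen_univ hμ.normalized
  have hC : IsCompact (K₀ \ U) := hK₀.diff hU
  have hC0 : μ (K₀ \ U) = 0 :=
    (hsimple _ (Or.inr hC.isClosed)).resolve_right fun h => (hx _ hC h).2 hxU
  obtain ⟨M, hM, hMC, hM1⟩ := hsimple.exists_isCompact_subset_eq_one hμ hC.isClosed.isOpen_compl
    (by linarith [hμ.add_compl (Or.inr hC.isClosed)])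
  have hMK₀U : M ∩ K₀ ⊆ U := fun y hy => by_contra fun hyU => hMC hy.1 ⟨hy.2, hyU⟩
  have hMK₀ : IsCompact (M ∩ K₀) := hM.inter_right hK₀.isClosed
  refine le_antisymm (hμ.le_one (Or.inl hU)) ?_
  calc 1 = μ (M ∩ K₀) := (hinter M K₀ hM hK₀ hM1 hK₀1).symm
    _ ≤ μ U := hμ.mono (Or.inr hMK₀.isClosed) (Or.inl hU) hMK₀U

theorem exists_isDiracAt_of_inter (hsimple : IsSimpleQM μ) (hμ : IsQuasiMeasure μ)
    (hinter : ∀ K L : Set X, IsCompact K → IsCompact L → μ K = 1 → μ L = 1 → μ (K ∩ L) = 1) :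
    ∃ x, IsDiracAt μ x :=
  (hsimple.exists_forall_mem_of_inter hμ hinter).imp fun _ =>
    hsimple.isDiracAt_of_forall_mem hμ hinter

end IsSimpleQM

section Real

variable {ν : Set ℝ → ℝ}

theorem IsQuasiMeasure.monotone_Iic (hν : IsQuasiMeasure ν) : Monotone fun t => ν (Iic t) :=
  fun _ _ hst => hν.mono (Or.inr isClosed_Iic) (Or.inr isClosed_Iic) (Iic_subset_Iic.2 hst)

theorem IsQuasiMeasure.measure_Icc_eq_one (hν : IsQuasiMeasure ν) {a b : ℝ} (hab : a ≤ b)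
    (ha : ν (Iic a) = 0) (hb : ν (Iic b) = 1) : ν (Icc a b) = 1 := by
  have hlt : ν (Iio a) = 0 := le_antisymm
    (ha ▸ hν.mono (Or.inl isOpen_Iio) (Or.inr isClosed_Iic) Iio_subset_Iic_self)
    (hν.nonneg _ (Or.inl isOpen_Iio))
  have hgt : ν (Ioi b) = 0 := by
    have := hν.add_compl (Or.inr (isClosed_Iic (a := b)))
    rw [compl_Iic] at this
    linarith
  have hdisj : Disjoint (Iio a) (Ioi b) :=
    Set.disjoint_left.2 fun y (hya : y < a) (hyb : b < y) => by linarith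
  have hunion := hν.additive _ _ (Or.inl isOpen_Iio) (Or.inl isOpen_Ioi)
    (Or.inl (isOpen_Iio.union isOpen_Ioi)) hdisj
  have hcompl := hν.add_compl (Or.inr (isClosed_Icc (a := a) (b := b)))
  rw [← Ici_inter_Iic, compl_inter, compl_Ici, compl_Iic, Ici_inter_Iic] at hcompl
  linarith

theorem IsSimpleQM.exists_threshold (hs : IsSimpleQM ν) (hν : IsQuasiMeasure ν) :
    ∃ t₀, (∀ t < t₀, ν (Iic t) = 0) ∧ ∀ t, t₀ < t → ν (Iic t) = 1 := by
  obtain ⟨K₀, hK₀, -, hK₀1⟩ := hs.exists_isCompact_subset_eq_one hν isOpen_univ hν.normalized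
  let S := {t | ν (Iic t) = 1}
  have hbdd : BddBelow S := by
    refine ⟨sInf K₀, fun s (hs1 : ν (Iic s) = 1) => not_lt.1 fun hlt => ?_⟩
    have hK₀s : K₀ ⊆ Ioi s := fun y hy => hlt.trans_le (csInf_le hK₀.bddBelow hy)
    have := hK₀1 ▸ hν.mono (Or.inr hK₀.isClosed) (Or.inl isOpen_Ioi) hK₀s
    have hcompl := hν.add_compl (Or.inr (isClosed_Iic (a := s)))
    rw [compl_Iic] at hcompl
    linarith
  have hSne : sSup K₀ ∈ S := le_antisymm (hν.le_one (Or.inr isClosed_Iic))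
    (hK₀1 ▸ hν.mono (Or.inr hK₀.isClosed) (Or.inr isClosed_Iic)
      fun y hy => le_csSup hK₀.bddAbove hy)
  refine ⟨sInf S, fun t ht => ?_, fun t ht => ?_⟩
  · exact (hs _ (Or.inr isClosed_Iic)).resolve_right fun h => (csInf_le hbdd h).not_gt ht
  · obtain ⟨u, hu1, hut⟩ := exists_lt_of_csInf_lt ⟨_, hSne⟩ ht
    exact le_antisymm (hν.le_one (Or.inr isClosed_Iic)) (hu1 ▸ hν.monotone_Iic hut.le)

theorem IsSimpleQM.exists_isDiracAt_real (hs : IsSimpleQM ν) (hν : IsQuasiMeasure ν) :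
    ∃ t, IsDiracAt ν t := by
  obtain ⟨t₀, hlt, hgt⟩ := hs.exists_threshold hν
  refine ⟨t₀, hν.isDiracAt_of_forall_isOpen fun U hU ht₀ => ?_⟩
  obtain ⟨ε, hε, hεU⟩ := Metric.nhds_basis_closedBall.mem_iff.1 (hU.mem_nhds ht₀)
  rw [Real.closedBall_eq_Icc] at hεU
  refine le_antisymm (hν.le_one (Or.inl hU)) ?_
  calc 1 = ν (Icc (t₀ - ε) (t₀ + ε)) := (hν.measure_Icc_eq_one (by linarith)
        (hlt _ (by linarith)) (hgt _ (by linarith))).symm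
    _ ≤ ν U := hν.mono (Or.inr isClosed_Icc) (Or.inl hU) hεU

end Real

open Classical in
theorem simple_subadditive_is_dirac {X : Type*} [TopologicalSpace X] [T2Space X]
    (μ : Set X → ℝ) (hμ : IsQuasiMeasure μ) (hsimple : IsSimpleQM μ)
    (hsub : ∀ U V : Set X, IsOpen U → IsOpen V → μ (U ∪ V) ≤ μ U + μ V) :
    (∃ x : X, ∀ A : Set X, IsImage A → μ A = if x ∈ A then 1 else 0) ∧
    ∀ ν : Set ℝ → ℝ, IsQuasiMeasure ν → IsSimpleQM ν →
      ∃ t : ℝ, ∀ A : Set ℝ, IsImage A → ν A = if t ∈ A then 1 else 0 :=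
  ⟨hsimple.exists_isDiracAt_of_inter hμ fun _ _ hK hL =>
      hμ.inter_eq_one_of_subadditive hsub hK.isClosed hL.isClosed,
    fun _ hν hs => hs.exists_isDiracAt_real hν⟩
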